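/- Let φ : ℝ^n → ℝ be C-semiconcave and κ-Lipschitz, H a Tonelli Hamiltonian, and let γ : [0,T] → ℝ^n be a strict singular characteristic for (φ,H). Then for every t ∈ [0,T), lim_{τ→t⁺} (1/(τ−t)) ∫_t^τ H(γ(s), p♯(γ(s))) ds = H(γ(t), p♯(γ(t))); that is, every t ∈ [0,T) is a right Lebesgue point of s ↦ H(γ(s), p♯(γ(s))). -/

import Mathlib

/-!
The lower bound comes from lower semicontinuity of the energy `x ↦ H(x, p♯(x))`: the graph of
`D⁺φ` is closed, supergradients are bounded by the Lipschitz constant of `φ`, and `p♯(x)`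
minimizes the continuous `H(x, ·)` over `D⁺φ(x)`.

For the upper bound fix `q = p♯(γ t)`. Convexity of `H` in `p` gives
`H(γ s, p♯(γ s)) ≤ H(γ s, q) + ⟨p♯(γ s) - q, γ'(s)⟩`, and along the Lipschitz curve
`(φ ∘ γ)'(s) = ⟨p, γ'(s)⟩` for every `p ∈ D⁺φ(γ s)` at almost every `s`. Integrating,
`∫ₜ^τ H(γ s, p♯(γ s)) ds ≤ ∫ₜ^τ H(γ s, q) ds + φ(γ τ) - φ(γ t) - ⟨q, γ τ - γ t⟩`, and
semiconcavity bounds the last terms by `(C/2) K² (τ - t)²`. The averages of the continuous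
`s ↦ H(γ s, q)` tend to `H(γ t, q)`.
-/

open MeasureTheory Set Filter Topology intervalIntegral
open scoped RealInnerProductSpace NNReal

noncomputable section

abbrev E (n : ℕ) := EuclideanSpace ℝ (Fin n)

variable {n : ℕ}

/-- `φ` is semiconcave with linear modulus and constant `C`. -/
def Semiconcave (C : ℝ) (φ : E n → ℝ) : Prop :=
  ConcaveOn ℝ Set.univ (fun x => φ x - C / 2 * ‖x‖ ^ 2)

def superdiff (φ : E n → ℝ) (x : E n) : Set (E n) :=
  {p | ∀ ε > 0, ∀ᶠ y in 𝓝 x, φ y - φ x - ⟪p, y - x⟫ ≤ ε * ‖y - x‖}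

structure IsTonelli (H : E n → E n → ℝ) : Prop where
  smooth : ContDiff ℝ 2 (fun q : E n × E n => H q.1 q.2)
  posdef : ∀ x p v : E n, v ≠ 0 → 0 < iteratedFDeriv ℝ 2 (H x) p ![v, v]
  superlinear : ∀ A : ℝ, 0 ≤ A → ∃ B : ℝ, ∀ x p, A * ‖p‖ - B ≤ H x p

def Hp (H : E n → E n → ℝ) (x p : E n) : E n := gradient (H x) p

/-- `ps` is the minimal energy selection of `D⁺φ` for the pair `(φ, H)`. -/
def MinSel (φ : E n → ℝ) (H : E n → E n → ℝ) (ps : E n → E n) : Prop :=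
  ∀ x, ps x ∈ superdiff φ x ∧ ∀ q ∈ superdiff φ x, H x (ps x) ≤ H x q

lemma eventually_mul_norm_sub_sq_le {F : Type*} [NormedAddCommGroup F] (A : ℝ) (x : F)
    {ε : ℝ} (hε : 0 < ε) : ∀ᶠ z in 𝓝 x, A * ‖z - x‖ ^ 2 ≤ ε * ‖z - x‖ := by
  filter_upwards [((Asymptotics.isLittleO_pow_sub_sub x one_lt_two).const_mul_left A).def hε]
    with z hz
  exact (le_abs_self _).trans (by simpa using hz)

lemma ConcaveOn.nonpos_of_eventually_le {F : Type*} [NormedAddCommGroup F] [NormedSpace ℝ F]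
    {D : F → ℝ} (hD : ConcaveOn ℝ univ D) {x : F} (hx : D x = 0)
    (hloc : ∀ ε > 0, ∀ᶠ z in 𝓝 x, D z ≤ ε * ‖z - x‖) (y : F) : D y ≤ 0 := by
  by_contra! hy
  have hyx : 0 < ‖y - x‖ := norm_pos_iff.2 (sub_ne_zero.2 fun h => by simp [h, hx] at hy)
  have hseg : Tendsto (fun s : ℝ => x + s • (y - x)) (𝓝[>] 0) (𝓝 x) := by
    have : Continuous fun s : ℝ => x + s • (y - x) := by fun_prop
    simpa using (this.tendsto 0).mono_left nhdsWithin_le_nhds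
  obtain ⟨s, hsD, hs0, hs1⟩ := ((hseg.eventually (hloc (D y / (2 * ‖y - x‖)) (by positivity))).and
    (Ioo_mem_nhdsGT one_pos)).exists
  have hconc := hD.2 (mem_univ x) (mem_univ y) (sub_nonneg.2 hs1.le) hs0.le (sub_add_cancel 1 s)
  have hpt : (1 - s) • x + s • y = x + s • (y - x) := by module
  rw [hpt, hx, smul_zero, zero_add, smul_eq_mul] at hconc
  rw [add_sub_cancel_left, norm_smul, Real.norm_of_nonneg hs0.le] at hsD
  have : s * D y ≤ s * D y / 2 := by
    calc s * D y ≤ D (x + s • (y - x)) := hconc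
      _ ≤ D y / (2 * ‖y - x‖) * (s * ‖y - x‖) := hsD
      _ = s * D y / 2 := by field_simp
  nlinarith [mul_pos hs0 hy]

lemma Semiconcave.mem_superdiff_iff {C : ℝ} {φ : E n → ℝ} (hφ : Semiconcave C φ) {x p : E n} :
    p ∈ superdiff φ x ↔ ∀ y, φ y - φ x - ⟪p, y - x⟫ ≤ C / 2 * ‖y - x‖ ^ 2 := by
  constructor
  · intro hp y
    set D : E n → ℝ := fun z => φ z - φ x - ⟪p, z - x⟫ - C / 2 * ‖z - x‖ ^ 2
    have hD : ConcaveOn ℝ univ D := by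
      have hlin : ConcaveOn ℝ univ fun z : E n => ⟪C • x - p, z⟫ :=
        (innerₗ (E n) (C • x - p)).concaveOn convex_univ
      have hsplit : D = ((fun z => φ z - C / 2 * ‖z‖ ^ 2) + fun z => ⟪C • x - p, z⟫) +
          fun _ => ⟪p, x⟫ - φ x - C / 2 * ‖x‖ ^ 2 := by
        funext z
        simp only [D, Pi.add_apply, norm_sub_sq_real, inner_sub_left, inner_sub_right,
          real_inner_smul_left, real_inner_comm x z]
        ring
      rw [hsplit]
      exact (ConcaveOn.add hφ hlin).add_const _
    refine sub_nonpos.1 (hD.nonpos_of_eventually_le (x := x) (by simp [D]) (fun ε hε => ?_) y)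
    filter_upwards [hp (ε / 2) (by positivity),
      eventually_mul_norm_sub_sq_le (-(C / 2)) x (half_pos hε)] with z hz hz'
    simp only [D]
    linarith
  · intro h ε hε
    filter_upwards [eventually_mul_norm_sub_sq_le (C / 2) x hε] with y hy
    exact (h y).trans hy

lemma norm_le_of_mem_superdiff {κ : ℝ≥0} {φ : E n → ℝ} (hφ : LipschitzWith κ φ) {x p : E n}
    (hp : p ∈ superdiff φ x) : ‖p‖ ≤ κ := by
  refine le_of_forall_pos_lt_add fun ε hε => ?_
  rcases (norm_nonneg p).eq_or_lt with hp0 | hp0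
  · rw [← hp0]; positivity
  -- test the superdifferential inequality in the direction `-p`
  have hseg : Tendsto (fun s : ℝ => x - s • p) (𝓝[>] 0) (𝓝 x) := by
    have : Continuous fun s : ℝ => x - s • p := by fun_prop
    simpa using (this.tendsto 0).mono_left nhdsWithin_le_nhds
  obtain ⟨s, hs, hs0⟩ :=
    ((hseg.eventually (hp (ε / 2) (half_pos hε))).and self_mem_nhdsWithin).exists
  have hs0 : (0 : ℝ) < s := hs0
  have hnorm : ‖x - s • p - x‖ = s * ‖p‖ := by
    rw [sub_sub_cancel_left, norm_neg, norm_smul, Real.norm_of_nonneg hs0.le]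
  have hinner : ⟪p, x - s • p - x⟫ = -(s * ‖p‖ ^ 2) := by
    rw [sub_sub_cancel_left, inner_neg_right, real_inner_smul_right, real_inner_self_eq_norm_sq]
  have hlip : φ x - φ (x - s • p) ≤ κ * (s * ‖p‖) := by
    have := hφ.dist_le_mul x (x - s • p)
    rw [Real.dist_eq, dist_comm, dist_eq_norm, hnorm] at this
    exact (le_abs_self _).trans this
  rw [hnorm, hinner] at hs
  have : s * ‖p‖ * ‖p‖ ≤ s * ‖p‖ * (κ + ε / 2) := by nlinarith
  have := le_of_mul_le_mul_left this (by positivity)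
  linarith

lemma Semiconcave.isClosed_superdiff_graph {C : ℝ} {φ : E n → ℝ} (hφ : Semiconcave C φ)
    (hφc : Continuous φ) : IsClosed {z : E n × E n | z.2 ∈ superdiff φ z.1} := by
  simp_rw [hφ.mem_superdiff_iff, ofPred_forall]
  exact isClosed_iInter fun y => isClosed_le (by fun_prop) (by fun_prop)

lemma LowerSemicontinuous.comp_fiberwise_argmin {X Y : Type*} [TopologicalSpace X] [T2Space X]
    [WeaklyLocallyCompactSpace X] [TopologicalSpace Y] {f : X × Y → ℝ}
    (hf : LowerSemicontinuous f) {G : Set (X × Y)} (hG : IsClosed G) {K : Set Y}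
    (hK : IsCompact K) {s : X → Y} (hsK : ∀ x, s x ∈ K) (hsG : ∀ x, (x, s x) ∈ G)
    (hmin : ∀ x y, (x, y) ∈ G → f (x, s x) ≤ f (x, y)) :
    LowerSemicontinuous fun x => f (x, s x) := by
  intro x c hc
  obtain ⟨L, hL, hLx⟩ := exists_compact_mem_nhds x
  -- `S` is closed as the projection of a compact set, and misses `x` by minimality of `s x`
  set S := Prod.fst '' ((L ×ˢ K) ∩ (G ∩ f ⁻¹' Iic c))
  have hS : IsClosed S :=
    ((hL.prod hK).inter_right (hG.inter (hf.isClosed_preimage c))).image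
      continuous_fst |>.isClosed
  have hxS : x ∉ S := by
    rintro ⟨⟨x', y⟩, ⟨-, hyG, hyc⟩, rfl⟩
    exact (hc.trans_le (hmin x' y hyG)).not_ge hyc
  filter_upwards [hLx, hS.isOpen_compl.mem_nhds hxS] with x' hx'L hx'S
  by_contra! hle
  exact hx'S ⟨(x', s x'), ⟨⟨hx'L, hsK x'⟩, hsG x', hle⟩, rfl⟩

lemma MinSel.lowerSemicontinuous {C : ℝ} {κ : ℝ≥0} {φ : E n → ℝ} (hφ : Semiconcave C φ)
    (hφLip : LipschitzWith κ φ) {H : E n → E n → ℝ}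
    (hH : Continuous fun z : E n × E n => H z.1 z.2) {ps : E n → E n} (hps : MinSel φ H ps) :
    LowerSemicontinuous fun x => H x (ps x) :=
  hH.lowerSemicontinuous.comp_fiberwise_argmin (hφ.isClosed_superdiff_graph hφLip.continuous)
    (isCompact_closedBall 0 κ)
    (fun x => mem_closedBall_zero_iff.2 (norm_le_of_mem_superdiff hφLip (hps x).1))
    (fun x => (hps x).1) (fun x => (hps x).2)

lemma ContinuousOn.integrableOn_Icc_energy {H : E n → E n → ℝ}
    (hH : Continuous fun z : E n × E n => H z.1 z.2) {ps : E n → E n} {R : ℝ}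
    (hR : ∀ x, ‖ps x‖ ≤ R) (he : Measurable fun x => H x (ps x)) {γ : ℝ → E n} {a b : ℝ}
    (hγ : ContinuousOn γ (Icc a b)) : IntegrableOn (fun s => H (γ s) (ps (γ s))) (Icc a b) := by
  obtain ⟨M, hM⟩ := ((isCompact_Icc.image_of_continuousOn hγ).prod
    (isCompact_closedBall (0 : E n) R)).exists_bound_of_continuousOn hH.continuousOn
  refine Integrable.mono' (integrable_const M)
    (he.comp_aemeasurable (hγ.aemeasurable measurableSet_Icc)).aestronglyMeasurable ?_
  filter_upwards [ae_restrict_mem measurableSet_Icc] with s hs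
  exact hM (γ s, ps (γ s)) ⟨mem_image_of_mem γ hs, mem_closedBall_zero_iff.2 (hR (γ s))⟩

lemma IsTonelli.add_inner_le {H : E n → E n → ℝ} (hH : IsTonelli H) (x p q : E n) :
    H x p + ⟪Hp H x p, q - p⟫ ≤ H x q := by
  have hHx : ContDiff ℝ 2 (H x) := hH.smooth.comp (contDiff_const.prodMk contDiff_id)
  set w := q - p
  set line : ℝ → E n := fun r => p + r • w
  have hline : ∀ r, HasDerivAt line w r := fun r => by
    simpa [line] using ((hasDerivAt_id r).smul_const w).const_add p
  set h' : ℝ → ℝ := fun r => fderiv ℝ (H x) (line r) w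
  have hh' : ∀ r, HasDerivAt (fun r => H x (line r)) (h' r) r := fun r =>
    ((hHx.differentiable two_ne_zero) (line r)).hasFDerivAt.comp_hasDerivAt r (hline r)
  have hh'' : ∀ r, HasDerivAt h' (iteratedFDeriv ℝ 2 (H x) (line r) ![w, w]) r := fun r => by
    have hd := ((hHx.fderiv_right (m := 1) le_rfl).differentiable one_ne_zero (line r)).hasFDerivAt
    rw [iteratedFDeriv_two_apply]
    exact (ContinuousLinearMap.apply ℝ ℝ w).hasFDerivAt.comp_hasDerivAt r
      (hd.comp_hasDerivAt r (hline r))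
  have hmono : Monotone (deriv fun r => H x (line r)) := by
    have : deriv (fun r => H x (line r)) = h' := funext fun r => (hh' r).deriv
    rw [this]
    refine monotone_of_deriv_nonneg (fun r => (hh'' r).differentiableAt) fun r => ?_
    rw [(hh'' r).deriv]
    rcases eq_or_ne w 0 with hw | hw
    · rw [hw, ContinuousMultilinearMap.map_coord_zero _ 0 rfl]
    · exact (hH.posdef x (line r) w hw).le
  have hconv := hmono.convexOn_univ_of_deriv fun r => (hh' r).differentiableAt
  have hslope := hconv.le_slope_of_hasDerivAt (mem_univ 0) (mem_univ 1) one_pos (hh' 0)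
  have hline0 : line 0 = p := by simp [line]
  have hline1 : line 1 = q := by simp [line, w]
  simp only [slope_def_field, hline0, hline1, sub_zero, div_one] at hslope
  have hgrad : ⟪Hp H x p, w⟫ = h' 0 := by simp [h', hline0, Hp, gradient]
  linarith

lemma Semiconcave.eq_inner_of_hasDerivAt_comp {C : ℝ} {φ : E n → ℝ} (hφ : Semiconcave C φ)
    {γ : ℝ → E n} {s d : ℝ} {p v : E n} (hp : p ∈ superdiff φ (γ s))
    (hγ : HasDerivAt γ v s) (hd : HasDerivAt (φ ∘ γ) d s) : d = ⟪p, v⟫ := by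
  -- `s` maximizes `r ↦ φ (γ r) - ⟪p, γ r⟫ - C/2 ‖γ r - γ s‖²`, whose derivative at `s` is
  -- `d - ⟪p, v⟫`.
  have hmax : IsLocalMax (fun r => φ (γ r) - ⟪p, γ r⟫ - C / 2 * ‖γ r - γ s‖ ^ 2) s :=
    Eventually.of_forall fun r => by
      have := hφ.mem_superdiff_iff.1 hp (γ r)
      simp only [sub_self, norm_zero, inner_sub_right] at this ⊢
      linarith
  have hderiv := (hd.sub (((innerSL ℝ p).hasFDerivAt).comp_hasDerivAt s hγ)).sub
    (((hγ.sub_const (γ s)).norm_sq).const_mul (C / 2))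
  simp only [sub_self, inner_zero_left, mul_zero, sub_zero] at hderiv
  exact sub_eq_zero.1 (hmax.hasDerivAt_eq_zero hderiv)

lemma LipschitzOnWith.integral_eq_sub_of_ae_hasDerivAt {f f' : ℝ → ℝ} {a b : ℝ} {K : ℝ≥0}
    (hab : a ≤ b) (hf : LipschitzOnWith K f (Icc a b))
    (hf' : ∀ᵐ x, x ∈ Ioo a b → HasDerivAt f (f' x) x) :
    IntervalIntegrable f' volume a b ∧ ∫ x in a..b, f' x = f b - f a := by
  have hac := (uIcc_of_le hab ▸ hf).absolutelyContinuousOnInterval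
  have hderiv : ∀ᵐ x, x ∈ uIoc a b → deriv f x = f' x := by
    filter_upwards [hf', volume.ae_ne b] with x hx hxb hmem
    rw [uIoc_of_le hab] at hmem
    exact (hx ⟨hmem.1, lt_of_le_of_ne hmem.2 hxb⟩).deriv
  exact ⟨hac.intervalIntegrable_deriv.congr_ae ((ae_restrict_iff' measurableSet_uIoc).2 hderiv),
    (integral_congr_ae hderiv).symm.trans hac.integral_deriv_eq_sub⟩

lemma Semiconcave.integral_inner_sub_inner_eq {C : ℝ} {κ K : ℝ≥0} {φ : E n → ℝ}
    (hφ : Semiconcave C φ) (hφLip : LipschitzWith κ φ) {γ p v : ℝ → E n} {a b : ℝ}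
    (hab : a ≤ b) (hγ : LipschitzOnWith K γ (Icc a b))
    (hγ' : ∀ᵐ s, s ∈ Ioo a b → HasDerivAt γ (v s) s) (hp : ∀ s, p s ∈ superdiff φ (γ s))
    (q : E n) :
    IntervalIntegrable (fun s => ⟪p s, v s⟫ - ⟪q, v s⟫) volume a b ∧
      ∫ s in a..b, (⟪p s, v s⟫ - ⟪q, v s⟫) = (φ (γ b) - ⟪q, γ b⟫) - (φ (γ a) - ⟪q, γ a⟫) := by
  have hφγ : LipschitzOnWith (κ * K) (φ ∘ γ) (Icc a b) := hφLip.comp_lipschitzOnWith hγ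
  have hqγ : LipschitzOnWith (‖innerSL ℝ q‖₊ * K) (fun s => ⟪q, γ s⟫) (Icc a b) :=
    (innerSL ℝ q).lipschitz.comp_lipschitzOnWith hγ
  refine (hφγ.sub hqγ).integral_eq_sub_of_ae_hasDerivAt hab ?_
  filter_upwards [hγ', (uIcc_of_le hab ▸ hφγ).absolutelyContinuousOnInterval.ae_differentiableAt]
    with s hγs hφγs hs
  have hγs := hγs hs
  have hφγs := (hφγs (uIcc_of_le hab ▸ Ioo_subset_Icc_self hs)).hasDerivAt
  rw [← hφ.eq_inner_of_hasDerivAt_comp (hp s) hγs hφγs]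
  exact hφγs.sub (((innerSL ℝ q).hasFDerivAt).comp_hasDerivAt s hγs)

lemma integral_energy_le {C : ℝ} {κ K : ℝ≥0} {φ : E n → ℝ} (hφ : Semiconcave C φ)
    (hφLip : LipschitzWith κ φ) {H : E n → E n → ℝ} (hH : IsTonelli H) {ps : E n → E n}
    (hps : ∀ x, ps x ∈ superdiff φ x) {γ : ℝ → E n} {a b : ℝ} (hab : a ≤ b)
    (hγ : LipschitzOnWith K γ (Icc a b))
    (hγ' : ∀ᵐ s, s ∈ Ioo a b → HasDerivAt γ (Hp H (γ s) (ps (γ s))) s)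
    (he : IntervalIntegrable (fun s => H (γ s) (ps (γ s))) volume a b)
    {q : E n} (hq : q ∈ superdiff φ (γ a)) :
    ∫ s in a..b, H (γ s) (ps (γ s)) ≤
      (∫ s in a..b, H (γ s) q) + |C| / 2 * K ^ 2 * (b - a) ^ 2 := by
  set v := fun s => Hp H (γ s) (ps (γ s))
  obtain ⟨hint, hftc⟩ :=
    hφ.integral_inner_sub_inner_eq hφLip hab hγ hγ' (fun s => hps (γ s)) q
  have hHq : IntervalIntegrable (fun s => H (γ s) q) volume a b :=
    ContinuousOn.intervalIntegrable_of_Icc hab <|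
      hH.smooth.continuous.comp_continuousOn (hγ.continuousOn.prodMk continuousOn_const)
  have hconv : ∀ s ∈ Icc a b,
      H (γ s) (ps (γ s)) ≤ H (γ s) q + (⟪ps (γ s), v s⟫ - ⟪q, v s⟫) := fun s _ => by
    have := hH.add_inner_le (γ s) (ps (γ s)) q
    rw [inner_sub_right, real_inner_comm q, real_inner_comm (ps (γ s))] at this
    linarith
  have hsc := hφ.mem_superdiff_iff.1 hq (γ b)
  have hK : ‖γ b - γ a‖ ≤ K * (b - a) := by
    simpa [Real.norm_of_nonneg (sub_nonneg.2 hab)] using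
      hγ.norm_sub_le (right_mem_Icc.2 hab) (left_mem_Icc.2 hab)
  calc ∫ s in a..b, H (γ s) (ps (γ s))
      ≤ ∫ s in a..b, (H (γ s) q + (⟪ps (γ s), v s⟫ - ⟪q, v s⟫)) :=
        intervalIntegral.integral_mono_on hab he (hHq.add hint) hconv
    _ = (∫ s in a..b, H (γ s) q) + ((φ (γ b) - ⟪q, γ b⟫) - (φ (γ a) - ⟪q, γ a⟫)) := by
        rw [intervalIntegral.integral_add hHq hint, hftc]
    _ ≤ (∫ s in a..b, H (γ s) q) + C / 2 * ‖γ b - γ a‖ ^ 2 := by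
        rw [inner_sub_right] at hsc
        linarith
    _ ≤ (∫ s in a..b, H (γ s) q) + |C| / 2 * (K * (b - a)) ^ 2 := by
        gcongr
        exact le_abs_self C
    _ = (∫ s in a..b, H (γ s) q) + |C| / 2 * K ^ 2 * (b - a) ^ 2 := by ring

lemma ae_hasDerivAt_of_ae_hasDerivWithinAt_Icc {F : Type*} [NormedAddCommGroup F]
    [NormedSpace ℝ F] {f f' : ℝ → F} {a b : ℝ}
    (h : ∀ᵐ t ∂(volume.restrict (Icc a b)), HasDerivWithinAt f (f' t) (Icc a b) t) :
    ∀ᵐ t, t ∈ Ioo a b → HasDerivAt f (f' t) t := by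
  filter_upwards [(ae_restrict_iff' measurableSet_Icc).1 h] with t ht htI
  exact (ht (Ioo_subset_Icc_self htI)).hasDerivAt (Icc_mem_nhds htI.1 htI.2)

lemma eventually_lt_average {f : ℝ → ℝ} {t c : ℝ}
    (hf : ∀ᶠ τ in 𝓝[>] t, IntervalIntegrable f volume t τ)
    (hlsc : LowerSemicontinuousWithinAt f (Ici t) t) (hc : c < f t) :
    ∀ᶠ τ in 𝓝[>] t, c < (τ - t)⁻¹ * ∫ s in t..τ, f s := by
  obtain ⟨c', hcc', hc'⟩ := exists_between hc
  obtain ⟨u, hu, hsub⟩ := mem_nhdsGE_iff_exists_Ico_subset.1 (hlsc c' hc')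
  filter_upwards [hf, self_mem_nhdsWithin, Ioo_mem_nhdsGT hu] with τ hfτ htτ hτu
  have hτt : 0 < τ - t := sub_pos.2 htτ
  have hbound : c' * (τ - t) ≤ ∫ s in t..τ, f s := by
    have := intervalIntegral.integral_mono_on htτ.le intervalIntegrable_const hfτ
      fun s hs => (hsub ⟨hs.1, hs.2.trans_lt hτu.2⟩).le
    rwa [intervalIntegral.integral_const, smul_eq_mul, mul_comm] at this
  calc c < c' := hcc'
    _ = (τ - t)⁻¹ * (c' * (τ - t)) := by field_simp
    _ ≤ (τ - t)⁻¹ * ∫ s in t..τ, f s := by gcongr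

lemma tendsto_average_of_le_add_sq {f g : ℝ → ℝ} {t A : ℝ}
    (hf : ∀ᶠ τ in 𝓝[>] t, IntervalIntegrable f volume t τ)
    (hf_lsc : LowerSemicontinuousWithinAt f (Ici t) t)
    (hg : ∀ᶠ τ in 𝓝[>] t, IntervalIntegrable g volume t τ)
    (hg_usc : UpperSemicontinuousWithinAt g (Ici t) t) (hgf : g t = f t)
    (hle : ∀ᶠ τ in 𝓝[>] t, ∫ s in t..τ, f s ≤ (∫ s in t..τ, g s) + A * (τ - t) ^ 2) :
    Tendsto (fun τ => (τ - t)⁻¹ * ∫ s in t..τ, f s) (𝓝[>] t) (𝓝 (f t)) := by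
  refine tendsto_order.2 ⟨fun c hc => eventually_lt_average hf hf_lsc hc, fun c hc => ?_⟩
  obtain ⟨c', hc', hc'c⟩ := exists_between hc
  have hneg_lsc : LowerSemicontinuousWithinAt (fun s => -g s) (Ici t) t := fun d hd =>
    (hg_usc (-d) (by linarith)).mono fun s hs => by linarith
  have hg_avg := eventually_lt_average (f := fun s => -g s) (hg.mono fun τ h => h.neg) hneg_lsc
    (show -c' < -g t by linarith)
  have herr : Tendsto (fun τ => A * (τ - t)) (𝓝[>] t) (𝓝 0) := by
    have : Continuous fun τ => A * (τ - t) := by fun_prop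
    simpa using (this.tendsto t).mono_left nhdsWithin_le_nhds
  filter_upwards [hg_avg, hle, self_mem_nhdsWithin, herr.eventually (gt_mem_nhds (sub_pos.2 hc'c))]
    with τ hgτ hleτ htτ herrτ
  have hτt : 0 < τ - t := sub_pos.2 htτ
  rw [intervalIntegral.integral_neg, mul_neg] at hgτ
  calc (τ - t)⁻¹ * ∫ s in t..τ, f s
      ≤ (τ - t)⁻¹ * ((∫ s in t..τ, g s) + A * (τ - t) ^ 2) := by gcongr
    _ = (τ - t)⁻¹ * (∫ s in t..τ, g s) + A * (τ - t) := by field_simp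
    _ < c := by linarith

theorem stmt10_general (C : ℝ) (κ : ℝ≥0) (φ : E n → ℝ)
    (hφ : Semiconcave C φ) (hφLip : LipschitzWith κ φ)
    (H : E n → E n → ℝ) (hH : IsTonelli H)
    (ps : E n → E n) (hps : MinSel φ H ps)
    (T : ℝ) (γ : ℝ → E n) (K : ℝ≥0)
    (hγ : LipschitzOnWith K γ (Set.Icc 0 T))
    (hssc : ∀ᵐ t ∂(volume.restrict (Set.Icc 0 T)),
      HasDerivWithinAt γ (Hp H (γ t) (ps (γ t))) (Set.Icc 0 T) t) :
    ∀ t ∈ Set.Ico (0:ℝ) T,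
      Tendsto (fun τ => (τ - t)⁻¹ * ∫ s in t..τ, H (γ s) (ps (γ s)))
        (𝓝[Set.Ioc t T] t) (𝓝 (H (γ t) (ps (γ t)))) := by
  rintro t ⟨ht0, htT⟩
  have hHc : Continuous fun z : E n × E n => H z.1 z.2 := hH.smooth.continuous
  have hlsc := hps.lowerSemicontinuous hφ hφLip hHc
  have hint := hγ.continuousOn.integrableOn_Icc_energy hHc
    (fun x => norm_le_of_mem_superdiff hφLip (hps x).1) hlsc.measurable
  have hsub : ∀ τ ∈ Ioo t T, Icc t τ ⊆ Icc 0 T := fun τ hτ => Icc_subset_Icc ht0 hτ.2.le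
  have hIcc : Icc 0 T ∈ 𝓝[≥] t := Icc_mem_nhdsGE_of_mem ⟨ht0, htT⟩
  have hHq : ContinuousOn (fun s => H (γ s) (ps (γ t))) (Icc 0 T) :=
    hHc.comp_continuousOn (hγ.continuousOn.prodMk continuousOn_const)
  have he : ∀ τ ∈ Ioo t T, IntervalIntegrable (fun s => H (γ s) (ps (γ s))) volume t τ :=
    fun τ hτ => (intervalIntegrable_iff_integrableOn_Icc_of_le hτ.1.le).2
      (hint.mono_set (hsub τ hτ))
  have hnear : ∀ᶠ τ in 𝓝[>] t, τ ∈ Ioo t T := Ioo_mem_nhdsGT htT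
  rw [nhdsWithin_Ioc_eq_nhdsGT htT]
  exact tendsto_average_of_le_add_sq (A := |C| / 2 * K ^ 2) (hnear.mono he)
    (fun c hc => ((hγ.continuousOn t ⟨ht0, htT.le⟩).mono_of_mem_nhdsWithin hIcc).tendsto.eventually
      (hlsc (γ t) c hc))
    (hnear.mono fun τ hτ => (hHq.mono (hsub τ hτ)).intervalIntegrable_of_Icc hτ.1.le)
    ((hHq t ⟨ht0, htT.le⟩).mono_of_mem_nhdsWithin hIcc).upperSemicontinuousWithinAt rfl
    (hnear.mono fun τ hτ => integral_energy_le hφ hφLip hH (fun x => (hps x).1) hτ.1.le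
      (hγ.mono (hsub τ hτ)) ((ae_hasDerivAt_of_ae_hasDerivWithinAt_Icc hssc).mono
        fun s hs hsI => hs (Ioo_subset_Ioo ht0 hτ.2.le hsI)) (he τ hτ) (hps (γ t)).1)

/-- Along a strict singular characteristic, every `t ∈ [0,T)` is a right Lebesgue
point of the energy `s ↦ H(γ(s), p♯(γ(s)))`. -/
theorem stmt10 (C : ℝ) (hC : 0 ≤ C) (κ : ℝ≥0) (φ : E n → ℝ)
    (hφ : Semiconcave C φ) (hφLip : LipschitzWith κ φ)
    (H : E n → E n → ℝ) (hH : IsTonelli H)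
    (ps : E n → E n) (hps : MinSel φ H ps)
    (T : ℝ) (hT : 0 < T) (γ : ℝ → E n) (K : ℝ≥0)
    (hγ : LipschitzOnWith K γ (Set.Icc 0 T))
    (hssc : ∀ᵐ t ∂(volume.restrict (Set.Icc 0 T)),
      HasDerivWithinAt γ (Hp H (γ t) (ps (γ t))) (Set.Icc 0 T) t) :
    ∀ t ∈ Set.Ico (0:ℝ) T,
      Tendsto (fun τ => (τ - t)⁻¹ * ∫ s in t..τ, H (γ s) (ps (γ s)))
        (𝓝[Set.Ioc t T] t) (𝓝 (H (γ t) (ps (γ t)))) :=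
  stmt10_general C κ φ hφ hφLip H hH ps hps T γ K hγ hssc

end
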